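/- Let G = (V,E) be a finite simple graph with Gallai–Edmonds decomposition GE(G) = (C,A,D), and let G' be obtained from G by adding a single new edge that is either contained in C or has at least one endpoint in A. Then GE(G') = GE(G) and ν(G') = ν(G). -/

import Mathlib

namespace GRT

variable {V : Type*}

/-- The matching number of a graph: the maximum size of a matching. -/
noncomputable def matchingNumber (G : SimpleGraph V) : ℕ :=
  sSup {n | ∃ M : G.Subgraph, M.IsMatching ∧ M.edgeSet.ncard = n}

/-- `M` is a maximum matching of `G`. -/
def IsMaximumMatching (G : SimpleGraph V) (M : G.Subgraph) : Prop :=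
  M.IsMatching ∧ ∀ M' : G.Subgraph, M'.IsMatching → M'.edgeSet.ncard ≤ M.edgeSet.ncard

/-- A vertex is essential if it is covered by every maximum matching. -/
def Essential (G : SimpleGraph V) (v : V) : Prop :=
  ∀ M : G.Subgraph, IsMaximumMatching G M → v ∈ M.verts

/-- The `D`-part of the Gallai–Edmonds decomposition: inessential vertices. -/
def geD (G : SimpleGraph V) : Set V := {v | ¬ Essential G v}

/-- The `A`-part of the Gallai–Edmonds decomposition. -/
def geA (G : SimpleGraph V) : Set V := {v | v ∉ geD G ∧ ∃ u ∈ geD G, G.Adj v u}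

/-- The `C`-part of the Gallai–Edmonds decomposition. -/
def geC (G : SimpleGraph V) : Set V := {v | v ∉ geD G ∧ v ∉ geA G}

/-- The vertex sets of the connected components of the induced subgraph `G[D]`,
viewed as subsets of the ambient vertex set. -/
def componentSets (G : SimpleGraph V) (D : Set V) : Set (Set V) :=
  {S | ∃ c : (G.induce D).ConnectedComponent, S = Subtype.val '' c.supp}

/-- The vertex sets of the connected components of `G`. -/
def compSets (G : SimpleGraph V) : Set (Set V) :=
  {S | ∃ c : G.ConnectedComponent, S = c.supp}

/-- `G` is CAD-complete: distinct vertices of `C` are adjacent, vertices of `A` are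
adjacent to all other vertices, and every component of `G[D]` is a clique. -/
def CADComplete (G : SimpleGraph V) : Prop :=
  (∀ u ∈ geC G, ∀ v ∈ geC G, u ≠ v → G.Adj u v) ∧
  (∀ u ∈ geA G, ∀ v, u ≠ v → G.Adj u v) ∧
  (∀ S ∈ componentSets G (geD G), G.IsClique S)

/-- `G` is a disjoint union of odd cliques. -/
def DComplete (G : SimpleGraph V) : Prop :=
  ∀ c : G.ConnectedComponent, G.IsClique c.supp ∧ Odd c.supp.ncard

/-- The number of copies of `K_ℓ` (complete subgraphs on `ℓ` vertices) in `G`. -/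
noncomputable def cliqueCount (G : SimpleGraph V) (ℓ : ℕ) : ℕ :=
  {s : Finset V | G.IsNClique ℓ s}.ncard

/-- The clique-cone graph `G_{n,x,y}` on vertex set `Fin n`: the first `x` vertices form
the clique set `X`, the next `y` vertices form the cone set `Y`, and two distinct
vertices are adjacent iff both lie in `X` or at least one lies in `Y`. -/
def cliqueCone (n x y : ℕ) : SimpleGraph (Fin n) :=
  SimpleGraph.fromRel (fun u v =>
    (u.val < x ∧ v.val < x) ∨ (x ≤ u.val ∧ u.val < x + y) ∨ (x ≤ v.val ∧ v.val < x + y))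

/-- `𝒢` is a `q`-colouring of `G`: a family of spanning subgraphs whose union is `G`. -/
def IsColouring {q : ℕ} (G : SimpleGraph V) (𝒢 : Fin q → SimpleGraph V) : Prop :=
  (⨆ j, 𝒢 j) = G

/-- A colouring is `(t₁K₂,…,t_qK₂)`-free if the `j`-th colour has no matching of size `t j`. -/
def IsFree {q : ℕ} (t : Fin q → ℕ) (𝒢 : Fin q → SimpleGraph V) : Prop :=
  ∀ j, matchingNumber (𝒢 j) ≤ t j - 1

/-- `φ_{ℓ,n}(x,y) = C(x+y,ℓ) + C(y,ℓ−1)·(n−x−y)`. -/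
def phi (ℓ n x y : ℕ) : ℕ :=
  Nat.choose (x + y) ℓ + Nat.choose y (ℓ - 1) * (n - x - y)

/-- The incidence graph of an indexed family of subsets of `U`. -/
def incidenceGraph {U I : Type*} (K : I → Finset U) : SimpleGraph (U ⊕ I) :=
  SimpleGraph.fromRel (fun a b => ∃ u i, a = Sum.inl u ∧ b = Sum.inr i ∧ u ∈ K i)

open SimpleGraph

section Basics
variable [Fintype V] {G : SimpleGraph V}

lemma matching_edge_bdd (M : G.Subgraph) : M.edgeSet.ncard ≤ Nat.card (Sym2 V) := by
  classical
  have h := Set.ncard_le_ncard (Set.subset_univ M.edgeSet) Set.finite_univ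
  simpa [Set.ncard_univ] using h

lemma sizes_bddAbove :
    BddAbove {n | ∃ M : G.Subgraph, M.IsMatching ∧ M.edgeSet.ncard = n} :=
  ⟨Nat.card (Sym2 V), fun _ ⟨M, _, hn⟩ => hn ▸ matching_edge_bdd M⟩

lemma le_matchingNumber {M : G.Subgraph} (hM : M.IsMatching) :
    M.edgeSet.ncard ≤ matchingNumber G :=
  le_csSup sizes_bddAbove ⟨M, hM, rfl⟩

lemma bot_isMatching : (⊥ : G.Subgraph).IsMatching := by
  intro v hv
  simp [Subgraph.verts_bot] at hv

lemma exists_maximumMatching :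
    ∃ M : G.Subgraph, IsMaximumMatching G M ∧ M.edgeSet.ncard = matchingNumber G := by
  have hne : {n | ∃ M : G.Subgraph, M.IsMatching ∧ M.edgeSet.ncard = n}.Nonempty :=
    ⟨(⊥ : G.Subgraph).edgeSet.ncard, ⊥, bot_isMatching, rfl⟩
  have hmem := Nat.sSup_mem hne sizes_bddAbove
  obtain ⟨M, hM, hcard⟩ := hmem
  refine ⟨M, ⟨hM, fun M' hM' => ?_⟩, hcard⟩
  rw [hcard]; exact le_matchingNumber hM'

lemma IsMaximumMatching.edge_ncard {M : G.Subgraph} (hM : IsMaximumMatching G M) :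
    M.edgeSet.ncard = matchingNumber G := by
  obtain ⟨K, hK, hKc⟩ := (exists_maximumMatching (G := G))
  exact le_antisymm (le_matchingNumber hM.1) (hKc ▸ hM.2 K hK.1)

/-- remove a set of vertices (and incident edges) from a subgraph -/
def restrictOff (M : G.Subgraph) (s : Set V) : G.Subgraph where
  verts := M.verts \ s
  Adj a b := M.Adj a b ∧ a ∉ s ∧ b ∉ s
  adj_sub h := M.adj_sub h.1
  edge_vert h := ⟨M.edge_vert h.1, h.2.1⟩
  symm := ⟨fun a b h => ⟨M.adj_symm h.1, h.2.2, h.2.1⟩⟩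


lemma IsMatching.adj_unique {M : G.Subgraph} (hM : M.IsMatching) {c d y : V}
    (h : M.Adj c d) (hy : M.Adj c y) : y = d :=
  (hM (M.edge_vert h)).unique hy h

lemma restrictOff_isMatching {M : G.Subgraph} (hM : M.IsMatching) {a b : V}
    (hab : M.Adj a b) : (restrictOff M {a, b}).IsMatching := by
  rintro v ⟨hv, hvs⟩
  obtain ⟨w, hw, huniq⟩ := hM hv
  have hws : w ∉ ({a, b} : Set V) := by
    rintro (rfl | rfl)
    · exact hvs (Or.inr (IsMatching.adj_unique hM hab hw.symm))
    · exact hvs (Or.inl (IsMatching.adj_unique hM (M.adj_symm hab) hw.symm))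
  exact ⟨w, ⟨hw, hvs, hws⟩, fun y hy => huniq y hy.1⟩

lemma restrictOff_edgeSet {M : G.Subgraph} (hM : M.IsMatching) {a b : V}
    (hab : M.Adj a b) :
    (restrictOff M {a, b}).edgeSet = M.edgeSet \ {s(a, b)} := by
  ext e
  induction e with
  | _ c d =>
    simp only [Subgraph.mem_edgeSet, Set.mem_diff, Set.mem_singleton_iff]
    constructor
    · rintro ⟨h, hc, hd⟩
      refine ⟨h, fun he => ?_⟩
      rw [Sym2.eq_iff] at he
      rcases he with ⟨rfl, rfl⟩ | ⟨rfl, rfl⟩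
      · exact hc (Or.inl rfl)
      · exact hc (Or.inr rfl)
    · rintro ⟨h, hne⟩
      refine ⟨h, fun hc => ?_, fun hd => ?_⟩
      · rcases hc with rfl | rfl
        · exact hne (by rw [Sym2.eq_iff]; exact Or.inl ⟨rfl, IsMatching.adj_unique hM hab h⟩)
        · exact hne (by rw [Sym2.eq_iff]; exact Or.inr ⟨rfl, IsMatching.adj_unique hM (M.adj_symm hab) h⟩)
      · rcases hd with rfl | rfl
        · exact hne (by rw [Sym2.eq_iff]; exact Or.inr ⟨IsMatching.adj_unique hM hab h.symm, rfl⟩)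
        · exact hne (by rw [Sym2.eq_iff]; exact Or.inl ⟨IsMatching.adj_unique hM (M.adj_symm hab) h.symm, rfl⟩)
end Basics


section Count
variable [Fintype V] {G : SimpleGraph V}

lemma matching_verts_ncard_aux :
    ∀ (n : ℕ) (M : G.Subgraph), M.IsMatching → M.edgeSet.ncard = n →
      M.verts.ncard = 2 * n := by
  intro n
  induction n with
  | zero =>
    intro M hM hc
    have he : M.edgeSet = ∅ := (Set.ncard_eq_zero (Set.toFinite _)).mp hc
    have hv : M.verts = ∅ := by
      ext v
      simp only [Set.mem_empty_iff_false, iff_false]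
      intro hv
      obtain ⟨w, hw, -⟩ := hM hv
      have : s(v, w) ∈ M.edgeSet := hw
      rw [he] at this
      exact this
    simp [hv]
  | succ n ih =>
    intro M hM hc
    have hne : M.edgeSet.Nonempty := by
      rw [← Set.ncard_pos (Set.toFinite _), hc]; omega
    obtain ⟨e, he⟩ := hne
    induction e with
    | _ a b =>
      have hab : M.Adj a b := he
      have hne' : a ≠ b := (M.adj_sub hab).ne
      have haM : a ∈ M.verts := M.edge_vert hab
      have hbM : b ∈ M.verts := M.edge_vert (M.adj_symm hab)
      have h1 : (restrictOff M {a, b}).IsMatching := restrictOff_isMatching hM hab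
      have h2 : (restrictOff M {a, b}).edgeSet.ncard = n := by
        rw [restrictOff_edgeSet hM hab, Set.ncard_diff_singleton_of_mem he, hc]
        omega
      have h3 := ih (restrictOff M {a, b}) h1 h2
      have h4 : (restrictOff M {a, b}).verts = M.verts \ {a, b} := rfl
      have hsub : ({a, b} : Set V) ⊆ M.verts := by
        rintro x (rfl | rfl); exacts [haM, hbM]
      have h5 : (M.verts \ {a, b}).ncard = M.verts.ncard - 2 := by
        rw [Set.ncard_diff hsub (Set.toFinite _)]
        congr 1
        rw [Set.ncard_pair hne']
      have h6 : 2 ≤ M.verts.ncard := by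
        calc 2 = ({a, b} : Set V).ncard := (Set.ncard_pair hne').symm
        _ ≤ M.verts.ncard := Set.ncard_le_ncard hsub (Set.toFinite _)
      rw [h4, h5] at h3
      omega

lemma matching_verts_ncard {M : G.Subgraph} (hM : M.IsMatching) :
    M.verts.ncard = 2 * M.edgeSet.ncard :=
  matching_verts_ncard_aux _ M hM rfl

lemma matching_verts_le {M : G.Subgraph} (hM : M.IsMatching) :
    M.verts.ncard ≤ 2 * matchingNumber G := by
  rw [matching_verts_ncard hM]
  exact Nat.mul_le_mul_left 2 (le_matchingNumber hM)

lemma isMaximumMatching_of_verts {M : G.Subgraph} (hM : M.IsMatching)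
    (h : M.verts.ncard = 2 * matchingNumber G) : IsMaximumMatching G M := by
  have h1 : M.edgeSet.ncard = matchingNumber G := by
    have := matching_verts_ncard hM
    omega
  exact ⟨hM, fun M' hM' => h1 ▸ le_matchingNumber hM'⟩

lemma IsMaximumMatching.verts_ncard {M : G.Subgraph} (hM : IsMaximumMatching G M) :
    M.verts.ncard = 2 * matchingNumber G := by
  rw [matching_verts_ncard hM.1, hM.edge_ncard]

end Count

section Alt
variable {W : Type*}

def altSeq (pM pN : W → Option W) (x : W) : ℕ → Option W
  | 0 => some x
  | (i+1) => (altSeq pM pN x i).bind (fun y => if i % 2 = 0 then pM y else pN y)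

variable {pM pN : W → Option W} {x : W}

lemma altSeq_zero : altSeq pM pN x 0 = some x := rfl

lemma altSeq_succ (i : ℕ) : altSeq pM pN x (i+1)
    = (altSeq pM pN x i).bind (fun y => if i % 2 = 0 then pM y else pN y) := rfl

lemma altSeq_inj (hsM : ∀ a b, pM a = some b → pM b = some a)
    (hsN : ∀ a b, pN a = some b → pN b = some a)
    (hiM : ∀ a, pM a ≠ some a) (hiN : ∀ a, pN a ≠ some a)
    (hx : pN x = none) :
    ∀ j i, i < j → ∀ y, altSeq pM pN x i = some y → altSeq pM pN x j = some y → False := by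
  intro j
  induction j using Nat.strong_induction_on with
  | _ j IH =>
    intro i hij y hi hj
    obtain ⟨j', rfl⟩ : ∃ j', j = j' + 1 := ⟨j - 1, by omega⟩
    rw [altSeq_succ] at hj
    obtain ⟨a, ha, hstep⟩ := Option.bind_eq_some_iff.mp hj
    by_cases hp : j' % 2 = 0
    · rw [if_pos hp] at hstep
      have hya : pM y = some a := hsM _ _ hstep
      by_cases hq : i % 2 = 0
      · have h1 : altSeq pM pN x (i+1) = some a := by
          rw [altSeq_succ, hi, Option.bind_some, if_pos hq]; exact hya
        rcases lt_trichotomy (i+1) j' with h | h | h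
        · exact IH j' (by omega) (i+1) h a h1 ha
        · omega
        · have hij' : i = j' := by omega
          subst hij'
          have hay : a = y := Option.some.inj (ha.symm.trans hi)
          subst hay
          exact hiM a hstep
      · obtain ⟨i', rfl⟩ : ∃ i', i = i' + 1 := ⟨i - 1, by omega⟩
        rw [altSeq_succ] at hi
        obtain ⟨b, hb, hstepb⟩ := Option.bind_eq_some_iff.mp hi
        rw [if_pos (by omega : i' % 2 = 0)] at hstepb
        have hyb : pM y = some b := hsM _ _ hstepb
        have hba : b = a := Option.some.inj (hyb.symm.trans hya)
        exact IH j' (by omega) i' (by omega) a (hba ▸ hb) ha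
    · rw [if_neg hp] at hstep
      have hya : pN y = some a := hsN _ _ hstep
      rcases Nat.eq_zero_or_pos i with rfl | hipos
      · have hxy : x = y := Option.some.inj hi
        subst hxy
        rw [hx] at hya
        exact nomatch hya
      · by_cases hq : i % 2 = 0
        · obtain ⟨i', rfl⟩ : ∃ i', i = i' + 1 := ⟨i - 1, by omega⟩
          rw [altSeq_succ] at hi
          obtain ⟨b, hb, hstepb⟩ := Option.bind_eq_some_iff.mp hi
          rw [if_neg (by omega : ¬ i' % 2 = 0)] at hstepb
          have hyb : pN y = some b := hsN _ _ hstepb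
          have hba : b = a := Option.some.inj (hyb.symm.trans hya)
          exact IH j' (by omega) i' (by omega) a (hba ▸ hb) ha
        · have h1 : altSeq pM pN x (i+1) = some a := by
            rw [altSeq_succ, hi, Option.bind_some, if_neg hq]; exact hya
          rcases lt_trichotomy (i+1) j' with h | h | h
          · exact IH j' (by omega) (i+1) h a h1 ha
          · omega
          · have hij' : i = j' := by omega
            subst hij'
            have hay : a = y := Option.some.inj (ha.symm.trans hi)
            subst hay
            exact hiN a hstep

lemma altSeq_exists_none [Finite W] (hsM : ∀ a b, pM a = some b → pM b = some a)
    (hsN : ∀ a b, pN a = some b → pN b = some a)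
    (hiM : ∀ a, pM a ≠ some a) (hiN : ∀ a, pN a ≠ some a)
    (hx : pN x = none) : ∃ n, altSeq pM pN x n = none := by
  by_contra hc
  push_neg at hc
  obtain ⟨i, j, hne, heq⟩ := Finite.exists_ne_map_eq_of_infinite
    (fun n => (altSeq pM pN x n).get (Option.isSome_iff_ne_none.mpr (hc n)))
  have hi : altSeq pM pN x i
      = some ((altSeq pM pN x i).get (Option.isSome_iff_ne_none.mpr (hc i))) :=
    (Option.some_get (Option.isSome_iff_ne_none.mpr (hc i))).symm
  have hj : altSeq pM pN x j
      = some ((altSeq pM pN x j).get (Option.isSome_iff_ne_none.mpr (hc j))) :=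
    (Option.some_get (Option.isSome_iff_ne_none.mpr (hc j))).symm
  rcases hne.lt_or_gt with h | h
  · exact altSeq_inj hsM hsN hiM hiN hx j i h _ hi (heq.symm ▸ hj)
  · exact altSeq_inj hsM hsN hiM hiN hx i j h _ hj (heq ▸ hi)

end Alt

section AltMain
variable {W : Type*} {pM pN : W → Option W} {x : W}

lemma alt_main [Finite W] (hsM : ∀ a b, pM a = some b → pM b = some a)
    (hsN : ∀ a b, pN a = some b → pN b = some a)
    (hiM : ∀ a, pM a ≠ some a) (hiN : ∀ a, pN a ≠ some a)
    (hx : pN x = none) (hx1 : (pM x).isSome) :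
    ∃ (S : Set W) (z : W),
      x ∈ S ∧ z ∈ S ∧ z ≠ x ∧
      (∀ s ∈ S, ∀ t, pM s = some t ∨ pN s = some t → t ∈ S) ∧
      (∀ s ∈ S, ∀ T : Set W,
        (∀ a ∈ T, ∀ b, pM a = some b ∨ pN a = some b → b ∈ T) → s ∈ T → x ∈ T) ∧
      (∀ s ∈ S, s ≠ x → s ≠ z → (pM s).isSome ∧ (pN s).isSome) ∧
      ((pM z = none ∧ (pN z).isSome) ∨ (pN z = none ∧ (pM z).isSome)) := by
  classical
  have hex : ∃ n, altSeq pM pN x n = none := altSeq_exists_none hsM hsN hiM hiN hx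
  set n₀ := Nat.find hex with hn₀def
  have hn₀ : altSeq pM pN x n₀ = none := Nat.find_spec hex
  have hmin : ∀ m, m < n₀ → altSeq pM pN x m ≠ none := fun m hm => Nat.find_min hex hm
  have hinj := altSeq_inj hsM hsN hiM hiN hx
  have hne0 : n₀ ≠ 0 := by
    intro h
    rw [h, altSeq_zero] at hn₀
    exact nomatch hn₀
  have hne1 : n₀ ≠ 1 := by
    intro h
    have h1 : altSeq pM pN x 1 = pM x := by
      rw [altSeq_succ, altSeq_zero, Option.bind_some, if_pos (by norm_num)]
    rw [h, h1] at hn₀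
    rw [hn₀] at hx1
    simp at hx1
  set k := n₀ - 1 with hkdef
  have hk1 : 1 ≤ k := by omega
  obtain ⟨z, hz⟩ : ∃ z, altSeq pM pN x k = some z :=
    Option.ne_none_iff_exists'.mp (hmin k (by omega))
  have hknone : altSeq pM pN x (k+1) = none := by
    have hkk : k + 1 = n₀ := by omega
    rw [hkk]; exact hn₀
  have hzstep : (if k % 2 = 0 then pM z else pN z) = none := by
    rw [altSeq_succ, hz, Option.bind_some] at hknone
    exact hknone
  have hnext : ∀ i, i < k → ∀ s, altSeq pM pN x i = some s →
      ∃ t, altSeq pM pN x (i+1) = some t ∧ (if i % 2 = 0 then pM s else pN s) = some t := by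
    intro i hik s hs
    obtain ⟨t, ht⟩ := Option.ne_none_iff_exists'.mp (hmin (i+1) (by omega))
    refine ⟨t, ht, ?_⟩
    rw [altSeq_succ, hs, Option.bind_some] at ht
    exact ht
  have hprev : ∀ i, 1 ≤ i → ∀ s, altSeq pM pN x i = some s →
      ∃ b, altSeq pM pN x (i-1) = some b ∧ (if (i-1) % 2 = 0 then pM s else pN s) = some b := by
    intro i h1 s hs
    obtain ⟨i', rfl⟩ : ∃ i', i = i' + 1 := ⟨i - 1, by omega⟩
    rw [altSeq_succ] at hs
    obtain ⟨b, hb, hstep⟩ := Option.bind_eq_some_iff.mp hs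
    have hii : i' + 1 - 1 = i' := rfl
    refine ⟨b, by rw [hii]; exact hb, ?_⟩
    rw [hii]
    by_cases hp : i' % 2 = 0
    · rw [if_pos hp] at hstep ⊢; exact hsM _ _ hstep
    · rw [if_neg hp] at hstep ⊢; exact hsN _ _ hstep
  refine ⟨{y | ∃ i, i ≤ k ∧ altSeq pM pN x i = some y}, z,
    ⟨0, by omega, altSeq_zero⟩, ⟨k, le_refl _, hz⟩,
    fun hzx => hinj k 0 (by omega) x altSeq_zero (hzx ▸ hz), ?_, ?_, ?_, ?_⟩
  · -- closure
    rintro s ⟨i, hik, hs⟩ t hmt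
    rcases hmt with hmt | hmt
    · by_cases hq : i % 2 = 0
      · rcases eq_or_lt_of_le hik with rfl | hik'
        · have hsz : s = z := Option.some.inj (hs.symm.trans hz)
          rw [if_pos hq] at hzstep
          rw [hsz, hzstep] at hmt
          exact nomatch hmt
        · obtain ⟨t', ht', hstep'⟩ := hnext i hik' s hs
          rw [if_pos hq] at hstep'
          have : t = t' := Option.some.inj (hmt.symm.trans hstep')
          exact ⟨i+1, by omega, this ▸ ht'⟩
      · obtain ⟨b, hb, hstep⟩ := hprev i (by omega) s hs
        rw [if_pos (by omega : (i-1) % 2 = 0)] at hstep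
        have : t = b := Option.some.inj (hmt.symm.trans hstep)
        exact ⟨i-1, by omega, this ▸ hb⟩
    · by_cases hq : i % 2 = 0
      · rcases Nat.eq_zero_or_pos i with rfl | hipos
        · have hsx : s = x := Option.some.inj (hs.symm.trans altSeq_zero)
          rw [hsx, hx] at hmt
          exact nomatch hmt
        · obtain ⟨b, hb, hstep⟩ := hprev i (by omega) s hs
          rw [if_neg (by omega : ¬ (i-1) % 2 = 0)] at hstep
          have : t = b := Option.some.inj (hmt.symm.trans hstep)
          exact ⟨i-1, by omega, this ▸ hb⟩
      · rcases eq_or_lt_of_le hik with rfl | hik'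
        · have hsz : s = z := Option.some.inj (hs.symm.trans hz)
          rw [if_neg hq] at hzstep
          rw [hsz, hzstep] at hmt
          exact nomatch hmt
        · obtain ⟨t', ht', hstep'⟩ := hnext i hik' s hs
          rw [if_neg hq] at hstep'
          have : t = t' := Option.some.inj (hmt.symm.trans hstep')
          exact ⟨i+1, by omega, this ▸ ht'⟩
  · -- connectivity back to x
    have hconn0 : ∀ i, ∀ y, altSeq pM pN x i = some y → ∀ T : Set W,
        (∀ a ∈ T, ∀ b, pM a = some b ∨ pN a = some b → b ∈ T) → y ∈ T → x ∈ T := by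
      intro i
      induction i with
      | zero =>
        intro y hy T _ hyT
        have : x = y := Option.some.inj hy
        exact this ▸ hyT
      | succ i ih =>
        intro y hy T hT hyT
        rw [altSeq_succ] at hy
        obtain ⟨a, ha, hstep⟩ := Option.bind_eq_some_iff.mp hy
        have haT : a ∈ T := by
          by_cases hp : i % 2 = 0
          · rw [if_pos hp] at hstep
            exact hT y hyT a (Or.inl (hsM _ _ hstep))
          · rw [if_neg hp] at hstep
            exact hT y hyT a (Or.inr (hsN _ _ hstep))
        exact ih a ha T hT haT
    rintro s ⟨i, hik, hs⟩ T hT hsT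
    exact hconn0 i s hs T hT hsT
  · -- covered
    rintro s ⟨i, hik, hs⟩ hsx hsz
    have hi0 : i ≠ 0 := by
      rintro rfl
      exact hsx (Option.some.inj (altSeq_zero.symm.trans hs)).symm
    have hikk : i ≠ k := by
      rintro rfl
      exact hsz (Option.some.inj (hz.symm.trans hs)).symm
    obtain ⟨t, ht, hstep_out⟩ := hnext i (by omega) s hs
    obtain ⟨b, hb, hstep_in⟩ := hprev i (by omega) s hs
    by_cases hp : i % 2 = 0
    · rw [if_pos hp] at hstep_out
      rw [if_neg (by omega : ¬ (i-1) % 2 = 0)] at hstep_in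
      exact ⟨Option.isSome_iff_exists.mpr ⟨t, hstep_out⟩,
        Option.isSome_iff_exists.mpr ⟨b, hstep_in⟩⟩
    · rw [if_neg hp] at hstep_out
      rw [if_pos (by omega : (i-1) % 2 = 0)] at hstep_in
      exact ⟨Option.isSome_iff_exists.mpr ⟨b, hstep_in⟩,
        Option.isSome_iff_exists.mpr ⟨t, hstep_out⟩⟩
  · -- endpoint
    obtain ⟨b, hb, hstep_in⟩ := hprev k (by omega) z hz
    by_cases hp : k % 2 = 0
    · rw [if_pos hp] at hzstep
      rw [if_neg (by omega : ¬ (k-1) % 2 = 0)] at hstep_in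
      exact Or.inl ⟨hzstep, Option.isSome_iff_exists.mpr ⟨b, hstep_in⟩⟩
    · rw [if_neg hp] at hzstep
      rw [if_pos (by omega : (k-1) % 2 = 0)] at hstep_in
      exact Or.inr ⟨hzstep, Option.isSome_iff_exists.mpr ⟨b, hstep_in⟩⟩

end AltMain

section Engine
variable [Fintype V] {G : SimpleGraph V} {M N : G.Subgraph}

open scoped Classical in
noncomputable def pf {M : G.Subgraph} (hM : M.IsMatching) (a : V) : Option V :=
  if h : a ∈ M.verts then some (hM h).choose else none

lemma pf_adj (hM : M.IsMatching) {a b : V} (h : pf hM a = some b) : M.Adj a b := by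
  rw [pf] at h
  split_ifs at h with hv
  exact (Option.some.inj h) ▸ (hM hv).choose_spec.1

lemma adj_pf (hM : M.IsMatching) {a b : V} (h : M.Adj a b) : pf hM a = some b := by
  have hv : a ∈ M.verts := M.edge_vert h
  rw [pf, dif_pos hv]
  exact congrArg some ((hM hv).choose_spec.2 b h).symm

lemma pf_none_iff (hM : M.IsMatching) {a : V} : pf hM a = none ↔ a ∉ M.verts := by
  constructor
  · intro h hv
    rw [pf, dif_pos hv] at h
    exact nomatch h
  · intro h
    rw [pf, dif_neg h]

lemma pf_isSome_iff (hM : M.IsMatching) {a : V} : (pf hM a).isSome ↔ a ∈ M.verts := by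
  rw [pf]
  split_ifs with hv <;> simp [hv]

lemma pf_sym (hM : M.IsMatching) : ∀ a b, pf hM a = some b → pf hM b = some a :=
  fun _ _ h => adj_pf hM (M.adj_symm (pf_adj hM h))

lemma pf_irrefl (hM : M.IsMatching) : ∀ a, pf hM a ≠ some a :=
  fun a h => (G.loopless.irrefl a) (M.adj_sub (pf_adj hM h))

def mix (M N : G.Subgraph) (S : Set V) : G.Subgraph where
  verts := (M.verts \ S) ∪ (N.verts ∩ S)
  Adj a b := (M.Adj a b ∧ a ∉ S ∧ b ∉ S) ∨ (N.Adj a b ∧ a ∈ S ∧ b ∈ S)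
  adj_sub h := by
    rcases h with ⟨h, -, -⟩ | ⟨h, -, -⟩
    exacts [M.adj_sub h, N.adj_sub h]
  edge_vert h := by
    rcases h with ⟨h, hs, -⟩ | ⟨h, hs, -⟩
    exacts [Or.inl ⟨M.edge_vert h, hs⟩, Or.inr ⟨N.edge_vert h, hs⟩]
  symm := ⟨fun a b h => by
    rcases h with ⟨h, ha, hb⟩ | ⟨h, ha, hb⟩
    exacts [Or.inl ⟨M.adj_symm h, hb, ha⟩, Or.inr ⟨N.adj_symm h, hb, ha⟩]⟩

lemma mix_isMatching (hM : M.IsMatching) (hN : N.IsMatching) {S : Set V}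
    (hcl : ∀ s ∈ S, ∀ t, M.Adj s t ∨ N.Adj s t → t ∈ S) :
    (mix M N S).IsMatching := by
  rintro v (⟨hv, hvS⟩ | ⟨hv, hvS⟩)
  · obtain ⟨w, hw, huniq⟩ := hM hv
    have hwS : w ∉ S := fun hwS => hvS (hcl w hwS v (Or.inl (M.adj_symm hw)))
    refine ⟨w, Or.inl ⟨hw, hvS, hwS⟩, ?_⟩
    rintro y (⟨hy, -, -⟩ | ⟨-, hvS', -⟩)
    · exact huniq y hy
    · exact (hvS hvS').elim
  · obtain ⟨w, hw, huniq⟩ := hN hv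
    have hwS : w ∈ S := hcl v hvS w (Or.inr hw)
    refine ⟨w, Or.inr ⟨hw, hvS, hwS⟩, ?_⟩
    rintro y (⟨-, hvS', -⟩ | ⟨hy, -, -⟩)
    · exact (hvS' hvS).elim
    · exact huniq y hy

lemma engine (hM : M.IsMatching) (hN : N.IsMatching)
    {x : V} (hxM : x ∈ M.verts) (hxN : x ∉ N.verts) :
    ∃ (S : Set V) (z : V), z ≠ x ∧ x ∈ S ∧ z ∈ S ∧
      (∀ s ∈ S, ∀ t, M.Adj s t ∨ N.Adj s t → t ∈ S) ∧
      (∀ s ∈ S, ∀ T : Set V,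
        (∀ a ∈ T, ∀ b, M.Adj a b ∨ N.Adj a b → b ∈ T) → s ∈ T → x ∈ T) ∧
      (∀ s ∈ S, s ≠ x → s ≠ z → s ∈ M.verts ∧ s ∈ N.verts) ∧
      ((z ∈ N.verts ∧ z ∉ M.verts ∧
          ∃ M₂ : G.Subgraph, M₂.IsMatching ∧ M₂.verts = (M.verts \ {x}) ∪ {z}) ∨
       (z ∈ M.verts ∧ z ∉ N.verts ∧
          ∃ N₂ : G.Subgraph, N₂.IsMatching ∧ N₂.verts = N.verts ∪ {x, z})) := by
  obtain ⟨S, z, hxS, hzS, hzx, hcl0, hconn0, hcov0, houtcome⟩ :=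
    alt_main (pf_sym hM) (pf_sym hN) (pf_irrefl hM) (pf_irrefl hN)
      ((pf_none_iff hN).mpr hxN) ((pf_isSome_iff hM).mpr hxM)
  have hcl : ∀ s ∈ S, ∀ t, M.Adj s t ∨ N.Adj s t → t ∈ S :=
    fun s hs t h => hcl0 s hs t (h.imp (adj_pf hM) (adj_pf hN))
  have hconn : ∀ s ∈ S, ∀ T : Set V,
      (∀ a ∈ T, ∀ b, M.Adj a b ∨ N.Adj a b → b ∈ T) → s ∈ T → x ∈ T :=
    fun s hs T hT => hconn0 s hs T
      (fun a ha b h => hT a ha b (h.imp (pf_adj hM) (pf_adj hN)))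
  have hcov : ∀ s ∈ S, s ≠ x → s ≠ z → s ∈ M.verts ∧ s ∈ N.verts := by
    intro s hs h1 h2
    obtain ⟨hm, hn⟩ := hcov0 s hs h1 h2
    exact ⟨(pf_isSome_iff hM).mp hm, (pf_isSome_iff hN).mp hn⟩
  refine ⟨S, z, hzx, hxS, hzS, hcl, hconn, hcov, ?_⟩
  rcases houtcome with ⟨hzM, hzN⟩ | ⟨hzN, hzM⟩
  · -- z is M-exposed, N-covered : balanced swap on M
    have hzM' : z ∉ M.verts := (pf_none_iff hM).mp hzM
    have hzN' : z ∈ N.verts := (pf_isSome_iff hN).mp hzN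
    refine Or.inl ⟨hzN', hzM', mix M N S, mix_isMatching hM hN hcl, ?_⟩
    have hSN : ∀ s ∈ S, s ≠ x → s ∈ N.verts := by
      intro s hs h1
      by_cases h2 : s = z
      · exact h2 ▸ hzN'
      · exact (hcov s hs h1 h2).2
    have hSM : ∀ s ∈ S, s ≠ z → s ∈ M.verts := by
      intro s hs h2
      by_cases h1 : s = x
      · exact h1 ▸ hxM
      · exact (hcov s hs h1 h2).1
    show (M.verts \ S) ∪ (N.verts ∩ S) = (M.verts \ {x}) ∪ {z}
    ext v
    constructor
    · rintro (⟨hvM, hvS⟩ | ⟨hvN, hvS⟩)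
      · exact Or.inl ⟨hvM, fun h => hvS (h ▸ hxS)⟩
      · by_cases h2 : v = z
        · exact Or.inr h2
        · exact Or.inl ⟨hSM v hvS h2, fun h1 => hxN (h1 ▸ hvN)⟩
    · rintro (⟨hvM, hvx⟩ | hvz)
      · by_cases hvS : v ∈ S
        · have h2 : v ≠ z := fun h => hzM' (h ▸ hvM)
          exact Or.inr ⟨hSN v hvS hvx, hvS⟩
        · exact Or.inl ⟨hvM, hvS⟩
      · exact Or.inr ⟨(hvz : v = z) ▸ hzN', hvz ▸ hzS⟩
  · -- z is N-exposed, M-covered : augmenting swap on N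
    have hzN' : z ∉ N.verts := (pf_none_iff hN).mp hzN
    have hzM' : z ∈ M.verts := (pf_isSome_iff hM).mp hzM
    have hclswap : ∀ s ∈ S, ∀ t, N.Adj s t ∨ M.Adj s t → t ∈ S :=
      fun s hs t h => hcl s hs t h.symm
    refine Or.inr ⟨hzM', hzN', mix N M S, mix_isMatching hN hM hclswap, ?_⟩
    have hSM : ∀ s ∈ S, s ∈ M.verts := by
      intro s hs
      by_cases h1 : s = x
      · exact h1 ▸ hxM
      by_cases h2 : s = z
      · exact h2 ▸ hzM'
      · exact (hcov s hs h1 h2).1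
    have hSN : ∀ s ∈ S, s ≠ x → s ≠ z → s ∈ N.verts :=
      fun s hs h1 h2 => (hcov s hs h1 h2).2
    show (N.verts \ S) ∪ (M.verts ∩ S) = N.verts ∪ {x, z}
    ext v
    constructor
    · rintro (⟨hvN, hvS⟩ | ⟨hvM, hvS⟩)
      · exact Or.inl hvN
      · by_cases h1 : v = x
        · exact Or.inr (Or.inl h1)
        by_cases h2 : v = z
        · exact Or.inr (Or.inr h2)
        · exact Or.inl (hSN v hvS h1 h2)
    · rintro (hvN | hvxz)
      · by_cases hvS : v ∈ S
        · exact Or.inr ⟨hSM v hvS, hvS⟩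
        · exact Or.inl ⟨hvN, hvS⟩
      · rcases hvxz with h1 | h2
        · exact Or.inr ⟨(h1 : v = x) ▸ hxM, h1 ▸ hxS⟩
        · exact Or.inr ⟨(h2 : v = z) ▸ hzM', h2 ▸ hzS⟩

end Engine

section Transfer
variable [Fintype V] {G : SimpleGraph V}

/-- Lift a subgraph along `G ≤ G'`. -/
def liftSub {G G' : SimpleGraph V} (h : G ≤ G') (M : G.Subgraph) : G'.Subgraph where
  verts := M.verts
  Adj := M.Adj
  adj_sub hab := h (M.adj_sub hab)
  edge_vert := M.edge_vert
  symm := M.symm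

lemma liftSub_isMatching {G G' : SimpleGraph V} (h : G ≤ G') {M : G.Subgraph}
    (hM : M.IsMatching) : (liftSub h M).IsMatching := hM

lemma liftSub_edgeSet {G G' : SimpleGraph V} (h : G ≤ G') (M : G.Subgraph) :
    (liftSub h M).edgeSet = M.edgeSet := rfl

/-- Push a matching of `G + uv` not using `uv` down to `G`. -/
def transferDown {u v : V} (M' : (G ⊔ SimpleGraph.fromEdgeSet {s(u,v)}).Subgraph)
    (hnuv : ¬ M'.Adj u v) : G.Subgraph where
  verts := M'.verts
  Adj := M'.Adj
  adj_sub := by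
    intro a b h
    rcases (SimpleGraph.sup_adj _ _ _ _).mp (M'.adj_sub h) with hg | hg
    · exact hg
    · exfalso
      rw [SimpleGraph.fromEdgeSet_adj, Set.mem_singleton_iff, Sym2.eq_iff] at hg
      rcases hg.1 with ⟨rfl, rfl⟩ | ⟨rfl, rfl⟩
      · exact hnuv h
      · exact hnuv (M'.adj_symm h)
  edge_vert := M'.edge_vert
  symm := M'.symm

lemma transferDown_isMatching {u v : V} {M' : (G ⊔ SimpleGraph.fromEdgeSet {s(u,v)}).Subgraph}
    (hnuv : ¬ M'.Adj u v) (hM' : M'.IsMatching) : (transferDown M' hnuv).IsMatching := hM'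

lemma transferDown_edgeSet {u v : V} (M' : (G ⊔ SimpleGraph.fromEdgeSet {s(u,v)}).Subgraph)
    (hnuv : ¬ M'.Adj u v) : (transferDown M' hnuv).edgeSet = M'.edgeSet := rfl

/-- Remove the vertices `u, v` (and the edge `uv`) from a matching of `G + uv`. -/
def shrink (G : SimpleGraph V) (u v : V)
    (M' : (G ⊔ SimpleGraph.fromEdgeSet {s(u,v)}).Subgraph) : G.Subgraph where
  verts := M'.verts \ {u, v}
  Adj a b := M'.Adj a b ∧ a ∉ ({u, v} : Set V) ∧ b ∉ ({u, v} : Set V)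
  adj_sub := by
    rintro a b ⟨h, ha, hb⟩
    rcases (SimpleGraph.sup_adj _ _ _ _).mp (M'.adj_sub h) with hg | hg
    · exact hg
    · exfalso
      rw [SimpleGraph.fromEdgeSet_adj, Set.mem_singleton_iff, Sym2.eq_iff] at hg
      rcases hg.1 with ⟨rfl, rfl⟩ | ⟨rfl, rfl⟩
      · exact ha (Or.inl rfl)
      · exact ha (Or.inr rfl)
  edge_vert h := ⟨M'.edge_vert h.1, h.2.1⟩
  symm := ⟨fun a b h => ⟨M'.adj_symm h.1, h.2.2, h.2.1⟩⟩

lemma shrink_isMatching {u v : V} {M' : (G ⊔ SimpleGraph.fromEdgeSet {s(u,v)}).Subgraph}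
    (hM' : M'.IsMatching) (huv : M'.Adj u v) : (shrink G u v M').IsMatching := by
  rintro a ⟨ha, has⟩
  obtain ⟨b, hb, huniq⟩ := hM' ha
  have hbs : b ∉ ({u, v} : Set V) := by
    rintro (rfl | rfl)
    · exact has (Or.inr (IsMatching.adj_unique hM' huv hb.symm))
    · exact has (Or.inl (IsMatching.adj_unique hM' (M'.adj_symm huv) hb.symm))
  exact ⟨b, ⟨hb, has, hbs⟩, fun y hy => huniq y hy.1⟩

/-- Extend a matching by one new edge. -/
def extendEdge (M : G.Subgraph) (u d : V) (h : G.Adj u d) : G.Subgraph where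
  verts := M.verts ∪ {u, d}
  Adj a b := M.Adj a b ∨ (a = u ∧ b = d) ∨ (a = d ∧ b = u)
  adj_sub := by
    rintro a b (hab | ⟨rfl, rfl⟩ | ⟨rfl, rfl⟩)
    exacts [M.adj_sub hab, h, h.symm]
  edge_vert := by
    rintro a b (hab | ⟨rfl, -⟩ | ⟨rfl, -⟩)
    exacts [Or.inl (M.edge_vert hab), Or.inr (Or.inl rfl), Or.inr (Or.inr rfl)]
  symm := ⟨by
    rintro a b (hab | ⟨rfl, rfl⟩ | ⟨rfl, rfl⟩)
    exacts [Or.inl (M.adj_symm hab), Or.inr (Or.inr ⟨rfl, rfl⟩), Or.inr (Or.inl ⟨rfl, rfl⟩)]⟩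

lemma extendEdge_isMatching {M : G.Subgraph} (hM : M.IsMatching) {u d : V}
    (h : G.Adj u d) (hu : u ∉ M.verts) (hd : d ∉ M.verts) :
    (extendEdge M u d h).IsMatching := by
  have hud : u ≠ d := h.ne
  rintro a (ha | ha | ha)
  · obtain ⟨b, hb, huniq⟩ := hM ha
    refine ⟨b, Or.inl hb, ?_⟩
    rintro y (hy | ⟨rfl, rfl⟩ | ⟨rfl, rfl⟩)
    · exact huniq y hy
    · exact absurd ha hu
    · exact absurd ha hd
  · rcases ha with rfl
    refine ⟨d, Or.inr (Or.inl ⟨rfl, rfl⟩), ?_⟩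
    rintro y (hy | ⟨-, rfl⟩ | ⟨h1, rfl⟩)
    · exact absurd (M.edge_vert hy) hu
    · rfl
    · exact absurd h1 hud
  · rcases ha with rfl
    refine ⟨u, Or.inr (Or.inr ⟨rfl, rfl⟩), ?_⟩
    rintro y (hy | ⟨h1, rfl⟩ | ⟨-, rfl⟩)
    · exact absurd (M.edge_vert hy) hd
    · exact absurd h1 hud.symm
    · rfl

lemma mem_geD_iff {w : V} : w ∈ geD G ↔ ∃ M, IsMaximumMatching G M ∧ w ∉ M.verts := by
  unfold geD Essential
  rw [Set.mem_setOf_eq]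
  push_neg
  rfl

/-- handy ncard facts -/
lemma ncard_union_single {s : Set V} {a : V} (ha : a ∉ s) :
    (s ∪ {a}).ncard = s.ncard + 1 := by
  rw [Set.union_singleton, Set.ncard_insert_of_notMem ha (Set.toFinite _)]

lemma ncard_union_pair {s : Set V} {a b : V} (ha : a ∉ s) (hb : b ∉ s) (hab : a ≠ b) :
    (s ∪ {a, b}).ncard = s.ncard + 2 := by
  have h1 : s ∪ {a, b} = insert a (insert b s) := by
    ext y; simp only [Set.mem_union, Set.mem_insert_iff, Set.mem_singleton_iff]; tauto
  rw [h1, Set.ncard_insert_of_notMem (by simp [ha, hab]) (Set.toFinite _),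
    Set.ncard_insert_of_notMem hb (Set.toFinite _)]

lemma ncard_diff_pair {s : Set V} {a b : V} (ha : a ∈ s) (hb : b ∈ s) (hab : a ≠ b) :
    (s \ {a, b}).ncard = s.ncard - 2 := by
  rw [Set.ncard_diff (by rintro y (rfl | rfl); exacts [ha, hb]) (Set.toFinite _),
    Set.ncard_pair hab]

end Transfer

section Key
variable [Fintype V] {G : SimpleGraph V} {u v : V}

lemma nu_le_nu' :
    matchingNumber G ≤ matchingNumber (G ⊔ SimpleGraph.fromEdgeSet {s(u,v)}) := by
  obtain ⟨M, hM, hMc⟩ := exists_maximumMatching (G := G)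
  rw [← hMc, ← liftSub_edgeSet (le_sup_left : G ≤ G ⊔ SimpleGraph.fromEdgeSet {s(u,v)}) M]
  exact le_matchingNumber (liftSub_isMatching _ hM.1)

lemma nu_eq (hu : Essential G u) :
    matchingNumber (G ⊔ SimpleGraph.fromEdgeSet {s(u,v)}) = matchingNumber G := by
  refine le_antisymm ?_ nu_le_nu'
  by_contra hlt
  push_neg at hlt
  obtain ⟨M', hM'max, hM'c⟩ :=
    exists_maximumMatching (G := G ⊔ SimpleGraph.fromEdgeSet {s(u,v)})
  by_cases huv : M'.Adj u v
  · have hN := shrink_isMatching hM'max.1 huv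
    have huM' : u ∈ M'.verts := M'.edge_vert huv
    have hvM' : v ∈ M'.verts := M'.edge_vert (M'.adj_symm huv)
    have hneuv : u ≠ v := (M'.adj_sub huv).ne
    have hc1 : M'.verts.ncard
        = 2 * matchingNumber (G ⊔ SimpleGraph.fromEdgeSet {s(u,v)}) :=
      IsMaximumMatching.verts_ncard hM'max
    have hc2 : (shrink G u v M').verts.ncard = M'.verts.ncard - 2 :=
      ncard_diff_pair huM' hvM' hneuv
    have hle := matching_verts_le hN
    have h2 : 2 ≤ M'.verts.ncard := by
      calc 2 = ({u, v} : Set V).ncard := (Set.ncard_pair hneuv).symm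
      _ ≤ M'.verts.ncard := Set.ncard_le_ncard (by rintro y (rfl | rfl); exacts [huM', hvM']) (Set.toFinite _)
    have hmax : IsMaximumMatching G (shrink G u v M') :=
      isMaximumMatching_of_verts hN (by omega)
    have := hu _ hmax
    exact this.2 (Or.inl rfl)
  · have hK := transferDown_isMatching huv hM'max.1
    have hle := le_matchingNumber hK
    rw [transferDown_edgeSet, hM'c] at hle
    omega

lemma essential_down (hνeq : matchingNumber (G ⊔ SimpleGraph.fromEdgeSet {s(u,v)}) = matchingNumber G)
    {w : V} (hw : Essential (G ⊔ SimpleGraph.fromEdgeSet {s(u,v)}) w) : Essential G w := by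
  intro M hMmax
  have hmax : IsMaximumMatching (G ⊔ SimpleGraph.fromEdgeSet {s(u,v)})
      (liftSub le_sup_left M) := by
    refine ⟨liftSub_isMatching _ hMmax.1, fun K hK => ?_⟩
    rw [liftSub_edgeSet, hMmax.edge_ncard, ← hνeq]
    exact le_matchingNumber hK
  exact hw _ hmax

lemma essential_up (hne : u ≠ v) (hnadj : ¬ G.Adj u v) (hu : Essential G u)
    (hv : Essential G v ∨ u ∈ geA G) {w : V} (hw : Essential G w) :
    Essential (G ⊔ SimpleGraph.fromEdgeSet {s(u,v)}) w := by
  have hνeq : matchingNumber (G ⊔ SimpleGraph.fromEdgeSet {s(u,v)}) = matchingNumber G :=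
    nu_eq hu
  set ν := matchingNumber G with hνdef
  intro M' hM'max
  by_contra hwM'
  by_cases huv : M'.Adj u v
  swap
  · -- M' does not use the new edge: it is a maximum matching of G
    have hK := transferDown_isMatching huv hM'max.1
    have hmax : IsMaximumMatching G (transferDown M' huv) := by
      refine ⟨hK, fun K' hK' => ?_⟩
      rw [transferDown_edgeSet, hM'max.edge_ncard, hνeq]
      exact le_matchingNumber hK'
    exact hwM' (hw _ hmax)
  · have huM' : u ∈ M'.verts := M'.edge_vert huv
    have hvM' : v ∈ M'.verts := M'.edge_vert (M'.adj_symm huv)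
    have hwu : w ≠ u := fun h => hwM' (h ▸ huM')
    have hwv : w ≠ v := fun h => hwM' (h ▸ hvM')
    set N := shrink G u v M' with hNdef
    have hN : N.IsMatching := shrink_isMatching hM'max.1 huv
    have hNverts : N.verts = M'.verts \ {u, v} := rfl
    have hM'card : M'.verts.ncard = 2 * ν := by
      rw [IsMaximumMatching.verts_ncard hM'max, hνeq]
    have h2 : 2 ≤ M'.verts.ncard := by
      calc 2 = ({u, v} : Set V).ncard := (Set.ncard_pair hne).symm
      _ ≤ M'.verts.ncard := Set.ncard_le_ncard (by rintro y (rfl | rfl); exacts [huM', hvM']) (Set.toFinite _)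
    have hNcard : N.verts.ncard = 2 * ν - 2 := by
      rw [hNverts, ncard_diff_pair huM' hvM' hne, hM'card]
    have hν1 : 1 ≤ ν := by omega
    have huN : u ∉ N.verts := by rw [hNverts]; exact fun h => h.2 (Or.inl rfl)
    have hvN : v ∉ N.verts := by rw [hNverts]; exact fun h => h.2 (Or.inr rfl)
    have hwN : w ∉ N.verts := by rw [hNverts]; exact fun h => hwM' h.1
    have hfinish : ∀ K : G.Subgraph, K.IsMatching → K.verts.ncard = 2 * ν →
        w ∉ K.verts → False := fun K hK hcard hwK =>
      hwK (hw K (isMaximumMatching_of_verts hK hcard))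
    -- a generic treatment of the first engine run, given a maximum matching M of G
    have hrun : ∀ M : G.Subgraph, IsMaximumMatching G M → w ∈ M.verts →
        ∃ (S : Set V) (z : V) (N₂ : G.Subgraph), z ≠ w ∧ w ∈ S ∧ z ∈ S ∧ z = u ∧
          (∀ s ∈ S, ∀ t, M.Adj s t ∨ N.Adj s t → t ∈ S) ∧
          (∀ s ∈ S, s ≠ w → s ≠ z → s ∈ M.verts ∧ s ∈ N.verts) ∧
          IsMaximumMatching G N₂ ∧ N₂.verts = N.verts ∪ {w, z} := by
      intro M hMmax hwM
      have hMcard : M.verts.ncard = 2 * ν := IsMaximumMatching.verts_ncard hMmax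
      have hwpos : 0 < M.verts.ncard := Set.ncard_pos (Set.toFinite _) |>.mpr ⟨w, hwM⟩
      obtain ⟨S, z, hzw, hwS, hzS, hcl, hconn, hcov, hout⟩ := engine hMmax.1 hN hwM hwN
      rcases hout with ⟨hzN, hzM, M₂, hM₂, hM₂v⟩ | ⟨hzM, hzN, N₂, hN₂, hN₂v⟩
      · -- balanced swap: a maximum matching of G missing w
        exfalso
        refine hfinish M₂ hM₂ ?_ ?_
        · rw [hM₂v, ncard_union_single (fun h => hzM h.1),
            Set.ncard_diff_singleton_of_mem hwM]
          omega
        · rw [hM₂v]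
          rintro (h | h)
          · exact h.2 rfl
          · exact hzw h.symm
      · -- augmenting swap: a maximum matching of G missing whichever of u,v,w is left out
        have hN₂card : N₂.verts.ncard = 2 * ν := by
          rw [hN₂v, ncard_union_pair hwN hzN hzw.symm]
          omega
        have hN₂max : IsMaximumMatching G N₂ := isMaximumMatching_of_verts hN₂ hN₂card
        by_cases hzu : z = u
        · exact ⟨S, z, N₂, hzw, hwS, hzS, hzu, hcl, hcov, hN₂max, hN₂v⟩
        · exfalso
          have huN₂ : u ∈ N₂.verts := hu _ hN₂max
          rw [hN₂v] at huN₂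
          rcases huN₂ with h | h | h
          · exact huN h
          · exact hwu (h : u = w).symm
          · exact hzu (h : u = z).symm
    by_cases hvE : Essential G v
    · -- both endpoints essential: the augmenting swap misses v
      obtain ⟨M, hMmax, -⟩ := exists_maximumMatching (G := G)
      obtain ⟨S, z, N₂, hzw, hwS, hzS, hzu, hcl, hcov, hN₂max, hN₂v⟩ :=
        hrun M hMmax (hw M hMmax)
      have hvN₂ : v ∈ N₂.verts := hvE _ hN₂max
      rw [hN₂v] at hvN₂
      rcases hvN₂ with h | h | h
      · exact hvN h
      · exact hwv (h : v = w).symm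
      · exact hne ((h : v = z).trans hzu).symm
    · -- v is inessential, u ∈ A
      have huA : u ∈ geA G := hv.resolve_left hvE
      obtain ⟨-, d, hdD, hud⟩ := huA
      have hdu : d ≠ u := fun h => (G.irrefl) (h ▸ hud)
      have hdv : d ≠ v := fun h => hnadj (h ▸ hud)
      have hdw : d ≠ w := fun h => (h ▸ hdD) hw
      by_cases hdN : d ∈ N.verts
      · -- second engine run from d
        obtain ⟨M, hMmax, hdM⟩ := mem_geD_iff.mp hdD
        have hwM : w ∈ M.verts := hw M hMmax
        have huM : u ∈ M.verts := hu M hMmax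
        have hMcard : M.verts.ncard = 2 * ν := IsMaximumMatching.verts_ncard hMmax
        obtain ⟨S, z, N₂, hzw, hwS, hzS, hzu, hcl, hcov, hN₂max, hN₂v⟩ :=
          hrun M hMmax hwM
        have huS : u ∈ S := hzu ▸ hzS
        have hSM : ∀ s ∈ S, s ∈ M.verts := by
          intro s hs
          by_cases h1 : s = w
          · exact h1 ▸ hwM
          by_cases h2 : s = z
          · rw [h2, hzu]; exact huM
          · exact (hcov s hs h1 h2).1
        have hdS : d ∉ S := fun h => hdM (hSM d h)
        obtain ⟨S', z', hz'd, hdS', hz'S', hcl', hconn', hcov', hout'⟩ :=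
          engine hN hMmax.1 hdN hdM
        rcases hout' with ⟨hz'M, hz'N, K, hK, hKv⟩ | ⟨hz'N, hz'M, K, hK, hKv⟩
        · -- balanced swap on N; then add the edge ud
          have hz'S : z' ∉ S := fun h =>
            hdS (hconn' z' hz'S' S (fun a ha b hab => hcl a ha b hab.symm) h)
          have hz'u : z' ≠ u := by
            intro h
            exact hz'S (by rw [h]; exact huS)
          have hz'w : z' ≠ w := by
            intro h
            exact hz'S (by rw [h]; exact hwS)
          have huK : u ∉ K.verts := by
            rw [hKv]
            rintro (h | h)
            · exact huN h.1
            · exact hz'u (h : u = z').symm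
          have hdK : d ∉ K.verts := by
            rw [hKv]
            rintro (h | h)
            · exact h.2 rfl
            · exact hz'd ((h : d = z').symm)
          have hKcard : K.verts.ncard = 2 * ν - 2 := by
            rw [hKv, ncard_union_single (fun h => hz'N h.1),
              Set.ncard_diff_singleton_of_mem hdN, hNcard]
            have : 0 < N.verts.ncard := Set.ncard_pos (Set.toFinite _) |>.mpr ⟨d, hdN⟩
            omega
          have hK₂ := extendEdge_isMatching hK hud huK hdK
          refine hfinish _ hK₂ ?_ ?_
          · show (K.verts ∪ {u, d}).ncard = 2 * ν
            rw [ncard_union_pair huK hdK (fun h => hdu h.symm), hKcard]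
            omega
          · show w ∉ K.verts ∪ {u, d}
            rintro (h | h | h)
            · rw [hKv] at h
              rcases h with h | h
              · exact hwN h.1
              · exact hz'w (h : w = z').symm
            · exact hwu h
            · exact hdw (h : w = d).symm
        · -- augmenting swap on M: a matching with too many vertices
          have := matching_verts_le hK
          rw [hKv, ncard_union_pair hdM hz'M hz'd.symm, hMcard] at this
          omega
      · -- d is not covered by N: add the edge ud directly
        have hK := extendEdge_isMatching hN hud huN hdN
        refine hfinish _ hK ?_ ?_
        · show (N.verts ∪ {u, d}).ncard = 2 * ν
          rw [ncard_union_pair huN hdN (fun h => hdu h.symm), hNcard]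
          omega
        · show w ∉ N.verts ∪ {u, d}
          rintro (h | h | h)
          · exact hwN h
          · exact hwu h
          · exact hdw (h : w = d).symm
end Key

section Final
variable [Fintype V] {G : SimpleGraph V} {u v : V}

lemma sup_edge_adj (hne : u ≠ v) (a b : V) :
    (G ⊔ SimpleGraph.fromEdgeSet {s(u,v)}).Adj a b ↔
      G.Adj a b ∨ (a = u ∧ b = v) ∨ (a = v ∧ b = u) := by
  rw [SimpleGraph.sup_adj, SimpleGraph.fromEdgeSet_adj, Set.mem_singleton_iff, Sym2.eq_iff]
  constructor
  · rintro (h | ⟨(⟨rfl, rfl⟩ | ⟨rfl, rfl⟩), -⟩)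
    · exact Or.inl h
    · exact Or.inr (Or.inl ⟨rfl, rfl⟩)
    · exact Or.inr (Or.inr ⟨rfl, rfl⟩)
  · rintro (h | ⟨rfl, rfl⟩ | ⟨rfl, rfl⟩)
    · exact Or.inl h
    · exact Or.inr ⟨Or.inl ⟨rfl, rfl⟩, hne⟩
    · exact Or.inr ⟨Or.inr ⟨rfl, rfl⟩, hne.symm⟩

lemma keyMain (hne : u ≠ v) (hnadj : ¬ G.Adj u v) (hu : Essential G u)
    (hv : Essential G v ∨ u ∈ geA G) :
    geC (G ⊔ SimpleGraph.fromEdgeSet {s(u, v)}) = geC G ∧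
    geA (G ⊔ SimpleGraph.fromEdgeSet {s(u, v)}) = geA G ∧
    geD (G ⊔ SimpleGraph.fromEdgeSet {s(u, v)}) = geD G ∧
    matchingNumber (G ⊔ SimpleGraph.fromEdgeSet {s(u, v)}) = matchingNumber G := by
  have hνeq : matchingNumber (G ⊔ SimpleGraph.fromEdgeSet {s(u,v)}) = matchingNumber G :=
    nu_eq hu
  have hD : geD (G ⊔ SimpleGraph.fromEdgeSet {s(u,v)}) = geD G := by
    ext w
    simp only [geD, Set.mem_setOf_eq, not_iff_not]
    exact ⟨essential_down hνeq, essential_up hne hnadj hu hv⟩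
  have hA : geA (G ⊔ SimpleGraph.fromEdgeSet {s(u,v)}) = geA G := by
    ext a
    simp only [geA, Set.mem_setOf_eq, hD]
    constructor
    · rintro ⟨haD, b, hbD, hab⟩
      refine ⟨haD, ?_⟩
      rcases (sup_edge_adj hne a b).mp hab with hg | ⟨hau, hbv⟩ | ⟨hav, hbu⟩
      · exact ⟨b, hbD, hg⟩
      · rw [hau]
        rw [hbv] at hbD
        have huA : u ∈ geA G := by
          rcases hv with hvE | huA
          · exact absurd hvE hbD
          · exact huA
        obtain ⟨-, d, hdD, hud⟩ := huA
        exact ⟨d, hdD, hud⟩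
      · rw [hbu] at hbD
        exact absurd hu hbD
    · rintro ⟨haD, b, hbD, hab⟩
      exact ⟨haD, b, hbD, (sup_edge_adj hne a b).mpr (Or.inl hab)⟩
  have hC : geC (G ⊔ SimpleGraph.fromEdgeSet {s(u,v)}) = geC G := by
    ext a
    simp only [geC, Set.mem_setOf_eq, hD, hA]
  exact ⟨hC, hA, hD, hνeq⟩

end Final


/-- `C/A`-edges: adding a single new edge contained in `C` or with an
endpoint in `A` preserves the Gallai–Edmonds decomposition and the matching number. -/
theorem GE_add_CA_edge [Fintype V] (G : SimpleGraph V) (u v : V)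
    (huv : u ≠ v) (hadj : ¬ G.Adj u v)
    (h : (u ∈ geC G ∧ v ∈ geC G) ∨ u ∈ geA G ∨ v ∈ geA G) :
    geC (G ⊔ SimpleGraph.fromEdgeSet {s(u, v)}) = geC G ∧
    geA (G ⊔ SimpleGraph.fromEdgeSet {s(u, v)}) = geA G ∧
    geD (G ⊔ SimpleGraph.fromEdgeSet {s(u, v)}) = geD G ∧
    matchingNumber (G ⊔ SimpleGraph.fromEdgeSet {s(u, v)}) = matchingNumber G := by
  have hess : ∀ a : V, a ∉ geD G → Essential G a := fun a ha => not_not.mp ha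
  rcases h with ⟨hCu, hCv⟩ | hAu | hAv
  · exact keyMain huv hadj (hess u hCu.1) (Or.inl (hess v hCv.1))
  · exact keyMain huv hadj (hess u hAu.1) (Or.inr hAu)
  · have hswap : s(u, v) = s(v, u) := Sym2.eq_swap
    rw [hswap]
    exact keyMain huv.symm (fun h' => hadj h'.symm) (hess v hAv.1) (Or.inr hAv)


end GRT
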